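/- For any distinct indices i_2,...,i_k ∈ {1,...,n} and every point z of U, the invariance identity ∑_{j=1}^n d_{j,i_2,...,i_k} · (∂L/∂z_j)(z) = 0 holds (the terms with j ∈ {i_2,...,i_k} vanish since then d_{j,i_2,...,i_k} = 0). -/

import Mathlib

noncomputable section

/-- The determinant `d_{l 1, …, l k}` of the `k × k` matrix whose `m`-th column consists of
`b (l m) 1, …, b (l m) k`. -/
def dd {n k : ℕ} (b : Fin n → Fin k → ℂ) (l : Fin k → Fin n) : ℂ :=
  Matrix.det (Matrix.of fun j m => b (l m) j)

/-- `f_{i_1,…,i_{k+1}}(z) = ∑_{l=1}^{k+1} (-1)^{l-1} d_{i_1,…,î_l,…,i_{k+1}} z_{i_l}`. -/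
def fF {n k : ℕ} (b : Fin n → Fin k → ℂ) (z : Fin n → ℂ) (I : Fin (k + 1) → Fin n) : ℂ :=
  ∑ l : Fin (k + 1), (-1) ^ (l : ℕ) * dd b (I ∘ l.succAbove) * z (I l)

/-- The discriminant `Δ ⊂ ℂⁿ`, the union over `1 ≤ i_1 < … < i_{k+1} ≤ n` of the zero sets of
the `f_{i_1,…,i_{k+1}}`. -/
def discr {n k : ℕ} (b : Fin n → Fin k → ℂ) : Set (Fin n → ℂ) :=
  {z | ∃ I : Fin (k + 1) → Fin n, StrictMono I ∧ fF b z I = 0}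

/-- The potential
`L(z) = (1/(2k)!) ∑_{1 ≤ i_1 < … < i_{k+1} ≤ n}
  (∏_{m=1}^{k+1} a_{i_m}/d_{i_1,…,î_m,…,i_{k+1}}²) f_{i_1,…,i_{k+1}}(z)^{2k}
  log f_{i_1,…,i_{k+1}}(z)`,
where `lg s` is the chosen holomorphic branch of `log f_{i_1,…,i_{k+1}}` attached to the
`(k+1)`-element subset `s = {i_1 < … < i_{k+1}}`. -/
def Lfun {n k : ℕ} (a : Fin n → ℂ) (b : Fin n → Fin k → ℂ)
    (lg : {s : Finset (Fin n) // s.card = k + 1} → (Fin n → ℂ) → ℂ)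
    (z : Fin n → ℂ) : ℂ :=
  (((2 * k).factorial : ℂ))⁻¹ *
    ∑ s : {s : Finset (Fin n) // s.card = k + 1},
      (∏ m : Fin (k + 1),
        a (s.1.orderEmbOfFin s.2 m) / (dd b (⇑(s.1.orderEmbOfFin s.2) ∘ m.succAbove)) ^ 2) *
      (fF b z ⇑(s.1.orderEmbOfFin s.2)) ^ (2 * k) * lg s z

/-!
Each `f_J` is a linear form, and on `U` the branch `log f_J` has differential `df_J / f_J`, so
`dL` is a linear combination of the `df_J`. The sum in question is `dL` applied to the vector
`v = (d_{j,i_2,…,i_k})_j`, and `df_J(v) = f_J(v) = 0`: expanding `d_{j,i_2,…,i_k}` along its first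
column writes `v` as a combination of the columns `(b_j^i)_j` of `b`, and `f_J` of a column of `b`
is the Laplace expansion of a determinant with two equal rows.
-/

section Determinants

variable {n k : ℕ} (b : Fin n → Fin (k + 1) → ℂ)

/-- Bordering the matrix of the columns `J` by a repeated row of `b` and expanding along that row
gives a vanishing determinant. -/
lemma fF_column_eq_zero (J : Fin (k + 2) → Fin n) (i : Fin (k + 1)) :
    fF b (fun x => b x i) J = 0 := by
  set M : Matrix (Fin (k + 2)) (Fin (k + 2)) ℂ :=
    Matrix.of fun r m => b (J m) ((Fin.cons i id : Fin (k + 2) → Fin (k + 1)) r)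
  have hM : M.det = 0 :=
    Matrix.det_zero_of_row_eq (i := 0) (j := i.succ) (Fin.succ_ne_zero i).symm (by ext; simp [M])
  rw [Matrix.det_succ_row_zero] at hM
  rw [← hM, fF]
  refine Finset.sum_congr rfl fun l _ => ?_
  have hminor : dd b (J ∘ l.succAbove) = (M.submatrix Fin.succ l.succAbove).det := rfl
  rw [hminor]
  simp only [Matrix.of_apply, Fin.cons_zero, M]
  ring

lemma dd_cons_eq_sum (I : Fin k → Fin n) (x : Fin n) :
    dd b (Fin.cons x I) =
      ∑ i : Fin (k + 1),
        ((-1) ^ (i : ℕ) * (Matrix.of fun p q => b (I q) (i.succAbove p)).det) * b x i := by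
  rw [dd, Matrix.det_succ_column_zero]
  refine Finset.sum_congr rfl fun i _ => ?_
  have hminor : (Matrix.of fun j m => b ((Fin.cons x I : Fin (k + 1) → Fin n) m) j).submatrix
      i.succAbove Fin.succ = Matrix.of fun p q => b (I q) (i.succAbove p) := rfl
  rw [hminor, Matrix.of_apply, Fin.cons_zero]
  ring

end Determinants

section LinearForm

variable {n k : ℕ} (b : Fin n → Fin k → ℂ)

def fFL (J : Fin (k + 1) → Fin n) : (Fin n → ℂ) →L[ℂ] ℂ :=
  ∑ l : Fin (k + 1), ((-1) ^ (l : ℕ) * dd b (J ∘ l.succAbove)) • ContinuousLinearMap.proj (J l)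

lemma fFL_apply (J : Fin (k + 1) → Fin n) (z : Fin n → ℂ) : fFL b J z = fF b z J := by
  simp [fFL, fF]

lemma hasFDerivAt_fF (J : Fin (k + 1) → Fin n) (z : Fin n → ℂ) :
    HasFDerivAt (fun w => fF b w J) (fFL b J) z := by
  rw [show (fun w => fF b w J) = fFL b J from funext fun w => (fFL_apply b J w).symm]
  exact (fFL b J).hasFDerivAt

end LinearForm

lemma fF_dd_cons_eq_zero {n k : ℕ} (b : Fin n → Fin (k + 1) → ℂ) (J : Fin (k + 2) → Fin n)
    (I : Fin k → Fin n) : fF b (fun x => dd b (Fin.cons x I)) J = 0 := by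
  have hcols : (fun x => dd b (Fin.cons x I)) = ∑ i : Fin (k + 1),
      ((-1) ^ (i : ℕ) * (Matrix.of fun p q => b (I q) (i.succAbove p)).det) • fun x => b x i := by
    ext x
    simp [dd_cons_eq_sum]
  rw [← fFL_apply, hcols, map_sum]
  simp [fFL_apply, fF_column_eq_zero]

lemma ContinuousLinearMap.sum_smul_apply_single {ι R M : Type*} [Fintype ι] [DecidableEq ι]
    [CommSemiring R] [TopologicalSpace R] [AddCommMonoid M] [Module R M] [TopologicalSpace M]
    (φ : (ι → R) →L[R] M) (v : ι → R) : ∑ j, v j • φ (Pi.single j 1) = φ v := by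
  conv_rhs => rw [pi_eq_sum_univ' v]
  simp [map_sum, map_smul]

section Calculus

variable {E : Type*} [NormedAddCommGroup E] [NormedSpace ℂ E] {f g : E → ℂ} {f' : E →L[ℂ] ℂ}
  {z : E}

lemma HasFDerivAt.of_cexp_eventuallyEq (hf : HasFDerivAt f f' z) (hg : DifferentiableAt ℂ g z)
    (hexp : ∀ᶠ w in nhds z, Complex.exp (g w) = f w) : HasFDerivAt g ((f z)⁻¹ • f') z := by
  have hexp' : HasFDerivAt f (Complex.exp (g z) • fderiv ℂ g z) z :=
    hg.hasFDerivAt.cexp.congr_of_eventuallyEq (hexp.mono fun w hw => hw.symm)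
  rw [← hexp'.unique hf, smul_smul, ← hexp.self_of_nhds, inv_mul_cancel₀ (Complex.exp_ne_zero _),
    one_smul]
  exact hg.hasFDerivAt

lemma HasFDerivAt.pow_mul_of_log (m : ℕ) (hf : HasFDerivAt f f' z)
    (hg : HasFDerivAt g ((f z)⁻¹ • f') z) :
    HasFDerivAt (fun w => f w ^ m * g w)
      ((f z ^ m * (f z)⁻¹ + g z * (m * f z ^ (m - 1))) • f') z := by
  refine ((hf.pow m).fun_mul hg).congr_fderiv ?_
  rw [nsmul_eq_mul]
  module

end Calculus

lemma exists_hasFDerivAt_Lfun {n k : ℕ} (a : Fin n → ℂ) (b : Fin n → Fin k → ℂ)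
    (lg : {s : Finset (Fin n) // s.card = k + 1} → (Fin n → ℂ) → ℂ) (z : Fin n → ℂ)
    (hlg : ∀ s, HasFDerivAt (lg s)
      ((fF b z (s.1.orderEmbOfFin s.2))⁻¹ • fFL b (s.1.orderEmbOfFin s.2)) z) :
    ∃ μ : {s : Finset (Fin n) // s.card = k + 1} → ℂ,
      HasFDerivAt (Lfun a b lg) (∑ s, μ s • fFL b (s.1.orderEmbOfFin s.2)) z := by
  set J := fun s : {s : Finset (Fin n) // s.card = k + 1} => ⇑(s.1.orderEmbOfFin s.2)
  set C := fun s => ∏ m : Fin (k + 1), a (J s m) / dd b (J s ∘ m.succAbove) ^ 2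
  set F := fun s => fF b z (J s)
  refine ⟨fun s => ((2 * k).factorial : ℂ)⁻¹ * C s *
    (F s ^ (2 * k) * (F s)⁻¹ + lg s z * ((2 * k : ℕ) * F s ^ (2 * k - 1))), ?_⟩
  have hL : Lfun a b lg =
      fun w => ((2 * k).factorial : ℂ)⁻¹ * ∑ s, C s * (fF b w (J s) ^ (2 * k) * lg s w) := by
    funext w
    simp only [Lfun, mul_assoc, J, C]
  rw [hL]
  refine ((HasFDerivAt.fun_sum fun s _ => (((hasFDerivAt_fF b (J s) z).pow_mul_of_log (2 * k)
    (hlg s)).const_mul (C s))).const_mul _).congr_fderiv ?_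
  simp only [Finset.smul_sum, smul_smul, mul_assoc]
  rfl

theorem stmt14_general (n k' : ℕ) (b : Fin n → Fin (k' + 1) → ℂ)
    (a : Fin n → ℂ)
    (U : Set (Fin n → ℂ)) (hUopen : IsOpen U)
    (lg : {s : Finset (Fin n) // s.card = (k' + 1) + 1} → (Fin n → ℂ) → ℂ)
    (hlghol : ∀ s, DifferentiableOn ℂ (lg s) U)
    (hlg : ∀ s, ∀ z ∈ U, Complex.exp (lg s z) = fF b z ⇑(s.1.orderEmbOfFin s.2)) :
    ∀ I : Fin k' → Fin n, Function.Injective I → ∀ z ∈ U,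
      ∑ j : Fin n,
        dd b (Fin.cons j I) * fderiv ℂ (Lfun a b lg) z (Pi.single j 1) = 0 := by
  intro I _ z hz
  have hU : U ∈ nhds z := hUopen.mem_nhds hz
  obtain ⟨μ, hL⟩ := exists_hasFDerivAt_Lfun a b lg z fun s =>
    (hasFDerivAt_fF b _ z).of_cexp_eventuallyEq ((hlghol s).differentiableAt hU)
      (Filter.eventually_of_mem hU (hlg s))
  simp_rw [← smul_eq_mul, ContinuousLinearMap.sum_smul_apply_single, hL.fderiv]
  simp [fFL_apply, fF_dd_cons_eq_zero]

/-- Fix `n > k ≥ 1` (here `k = k' + 1`), numbers `b_i^j` with all determinants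
`d_{i_1,…,i_k}` (distinct indices) nonzero, and weights `a_i ∈ ℂ^×` with `|a| = ∑ a_i ≠ 0`.
Let `U ⊆ ℂⁿ − Δ` be a connected simply connected open set on which holomorphic branches
`lg s` of `log f_{i_1,…,i_{k+1}}` are chosen, and let `L` be the potential.  Then for any
distinct indices `i_2,…,i_k` (the tuple `I`) and every `z ∈ U`, the invariance identity
`∑_{j=1}^n d_{j,i_2,…,i_k} (∂L/∂z_j)(z) = 0` holds. -/
theorem stmt14 (n k' : ℕ) (hnk : k' + 1 < n) (b : Fin n → Fin (k' + 1) → ℂ)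
    (hd : ∀ l : Fin (k' + 1) → Fin n, Function.Injective l → dd b l ≠ 0)
    (a : Fin n → ℂ) (ha : ∀ i, a i ≠ 0) (hsum : ∑ i, a i ≠ 0)
    (U : Set (Fin n → ℂ)) (hUopen : IsOpen U) (hUconn : IsConnected U)
    (hUsc : SimplyConnectedSpace ↥U) (hUD : U ⊆ (discr b)ᶜ)
    (lg : {s : Finset (Fin n) // s.card = (k' + 1) + 1} → (Fin n → ℂ) → ℂ)
    (hlghol : ∀ s, DifferentiableOn ℂ (lg s) U)
    (hlg : ∀ s, ∀ z ∈ U, Complex.exp (lg s z) = fF b z ⇑(s.1.orderEmbOfFin s.2)) :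
    ∀ I : Fin k' → Fin n, Function.Injective I → ∀ z ∈ U,
      ∑ j : Fin n,
        dd b (Fin.cons j I) * fderiv ℂ (Lfun a b lg) z (Pi.single j 1) = 0 :=
  stmt14_general n k' b a U hUopen lg hlghol hlg
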